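/- Let g, h ∈ F₂[x] with either (2·deg g < deg h and deg h odd) or (2·deg g = deg h and deg g > 0). Then the unit group of F₂[x,y]/(y² + g·y + h) is trivial. Equivalently, the only solution (a,b) ∈ F₂[x]² to a² + abg + b²h = 1 is (1,0). -/

import Mathlib

open Polynomial

/-- The quadratic `y² + g·y + h` over `F₂[x]`. -/
noncomputable def quadPoly (g h : Polynomial (ZMod 2)) : Polynomial (Polynomial (ZMod 2)) :=
  X ^ 2 + C g * X + C h

lemma quad_monic (g h : Polynomial (ZMod 2)) : (quadPoly g h).Monic := by
  unfold quadPoly; monicity!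

lemma quad_deg (g h : Polynomial (ZMod 2)) : (quadPoly g h).degree = 2 := by
  unfold quadPoly; compute_degree!

lemma two_eq_zero' : (2 : Polynomial (ZMod 2)) = 0 := by
  rw [← map_ofNat (C : ZMod 2 →+* _) 2, show (2 : ZMod 2) = 0 by decide, map_zero]

lemma two_eq_zero (g h : Polynomial (ZMod 2)) : (2 : AdjoinRoot (quadPoly g h)) = 0 := by
  rw [← map_ofNat (AdjoinRoot.of (quadPoly g h)) 2, two_eq_zero', map_zero]

lemma root_sq (g h : Polynomial (ZMod 2)) :
    (AdjoinRoot.root (quadPoly g h)) ^ 2 =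
      AdjoinRoot.of _ g * AdjoinRoot.root _ + AdjoinRoot.of _ h := by
  have hmk := AdjoinRoot.mk_self (f := quadPoly g h)
  have h0 : (AdjoinRoot.root (quadPoly g h)) ^ 2 + AdjoinRoot.of _ g * AdjoinRoot.root _
      + AdjoinRoot.of _ h = 0 := by
    rw [← hmk]; unfold quadPoly
    simp [map_add, map_mul, map_pow, AdjoinRoot.mk_X, AdjoinRoot.mk_C]
  have h2 := two_eq_zero g h
  linear_combination h0 -
    (AdjoinRoot.of (quadPoly g h) g * AdjoinRoot.root _ + AdjoinRoot.of _ h) * h2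

lemma exists_repr (g h : Polynomial (ZMod 2)) (z : AdjoinRoot (quadPoly g h)) :
    ∃ a b, z = AdjoinRoot.of _ a + AdjoinRoot.of _ b * AdjoinRoot.root _ := by
  obtain ⟨p, rfl⟩ := AdjoinRoot.mk_surjective z
  refine ⟨(p %ₘ quadPoly g h).coeff 0, (p %ₘ quadPoly g h).coeff 1, ?_⟩
  have h1 : AdjoinRoot.mk (quadPoly g h) p = AdjoinRoot.mk (quadPoly g h) (p %ₘ quadPoly g h) := by
    rw [AdjoinRoot.mk_eq_mk, modByMonic_eq_sub_mul_div p (quadPoly g h)]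
    exact ⟨p /ₘ quadPoly g h, by ring⟩
  have h2 : (p %ₘ quadPoly g h).degree ≤ 1 := by
    have := degree_modByMonic_lt p (quad_monic g h)
    rw [quad_deg] at this
    exact Order.le_of_lt_succ this
  rw [h1]
  conv_lhs => rw [eq_X_add_C_of_degree_le_one h2]
  simp [map_add, map_mul, AdjoinRoot.mk_X, AdjoinRoot.mk_C]
  ring

lemma of_inj (g h : Polynomial (ZMod 2)) :
    Function.Injective (AdjoinRoot.of (quadPoly g h)) := by
  intro p q hpq
  have h0 : AdjoinRoot.mk (quadPoly g h) (C p - C q) = 0 := by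
    rw [map_sub]; simp only [AdjoinRoot.mk_C]
    rw [sub_eq_zero]; exact hpq
  rw [AdjoinRoot.mk_eq_zero] at h0
  have hz : (C p - C q : Polynomial (Polynomial (ZMod 2))) = 0 := by
    refine eq_zero_of_dvd_of_degree_lt h0 ?_
    rw [quad_deg, ← C_sub]
    exact lt_of_le_of_lt degree_C_le (by norm_num)
  rw [← C_sub, C_eq_zero, sub_eq_zero] at hz
  exact hz

lemma sigma_ok (g h : Polynomial (ZMod 2)) :
    (quadPoly g h).eval₂ (AdjoinRoot.of (quadPoly g h))
      (AdjoinRoot.root (quadPoly g h) + AdjoinRoot.of _ g) = 0 := by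
  have hr := root_sq g h
  have h2 := two_eq_zero g h
  unfold quadPoly at hr h2 ⊢
  simp only [eval₂_add, eval₂_mul, eval₂_pow, eval₂_X, eval₂_C]
  set r := AdjoinRoot.root (X ^ 2 + C g * X + C h)
  set G := AdjoinRoot.of (X ^ 2 + C g * X + C h) g
  set H := AdjoinRoot.of (X ^ 2 + C g * X + C h) h
  linear_combination hr + (2*G*r + G^2 + H) * h2

noncomputable def sigma (g h : Polynomial (ZMod 2)) :
    AdjoinRoot (quadPoly g h) →+* AdjoinRoot (quadPoly g h) :=
  AdjoinRoot.lift (AdjoinRoot.of _) (AdjoinRoot.root _ + AdjoinRoot.of _ g) (sigma_ok g h)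

lemma norm_compute (g h a b : Polynomial (ZMod 2)) :
    (AdjoinRoot.of _ a + AdjoinRoot.of _ b * AdjoinRoot.root _) *
      sigma g h (AdjoinRoot.of _ a + AdjoinRoot.of _ b * AdjoinRoot.root _) =
      AdjoinRoot.of (quadPoly g h) (a ^ 2 + a * b * g + b ^ 2 * h) := by
  have hr := root_sq g h
  have h2 := two_eq_zero g h
  simp only [sigma, map_add, map_mul, AdjoinRoot.lift_of, AdjoinRoot.lift_root, map_pow]
  set r := AdjoinRoot.root (quadPoly g h)
  set A := AdjoinRoot.of (quadPoly g h) a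
  set B := AdjoinRoot.of (quadPoly g h) b
  set G := AdjoinRoot.of (quadPoly g h) g
  set H := AdjoinRoot.of (quadPoly g h) h
  linear_combination B^2 * hr + (A*B*r + B^2*G*r) * h2


lemma lc_one (p : Polynomial (ZMod 2)) (hp : p ≠ 0) : p.leadingCoeff = 1 := by
  have h1 := mt leadingCoeff_eq_zero.mp hp
  revert h1; generalize p.leadingCoeff = c; revert c; decide

lemma zmod2_ne_zero (c : ZMod 2) (hc : c ≠ 0) : c = 1 := by revert hc; revert c; decide

lemma eq_sol (g h : Polynomial (ZMod 2))
    (hcase : (2 * g.degree < h.degree ∧ Odd h.natDegree) ∨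
      (2 * g.degree = h.degree ∧ 0 < g.degree))
    (a b : Polynomial (ZMod 2))
    (hab : a ^ 2 + a * b * g + b ^ 2 * h = 1) : a = 1 ∧ b = 0 := by
  have hbz : b = 0 := by
    by_contra hb
    rcases hcase with ⟨hlt, hodd⟩ | ⟨heq, hgpos⟩
    · -- Type 1
      have hh : h ≠ 0 := by
        intro h0; rw [h0, degree_zero] at hlt; exact not_lt_bot hlt
      have hbh0 : b ^ 2 * h ≠ 0 := mul_ne_zero (pow_ne_zero 2 hb) hh
      have hdbh : (b ^ 2 * h).degree = ((2 * b.natDegree + h.natDegree : ℕ) : WithBot ℕ) := by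
        rw [degree_eq_natDegree hbh0, natDegree_mul (pow_ne_zero 2 hb) hh, natDegree_pow]
      have hng : ∀ _ : g ≠ 0, 2 * g.natDegree < h.natDegree := by
        intro hg
        rw [degree_eq_natDegree hg, degree_eq_natDegree hh] at hlt
        exact_mod_cast hlt
      have hnh : 0 < h.natDegree := hodd.pos
      rcases lt_trichotomy ((a ^ 2).degree) ((b ^ 2 * h).degree) with hcmp | hcmp | hcmp
      · have habg : (a * b * g).degree < (b ^ 2 * h).degree := by
          rcases eq_or_ne a 0 with rfl | ha
          · rw [hdbh]; simp only [zero_mul, mul_zero, degree_zero]; exact WithBot.bot_lt_coe _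
          rcases eq_or_ne g 0 with rfl | hg
          · rw [hdbh]; simp only [zero_mul, mul_zero, degree_zero]; exact WithBot.bot_lt_coe _
          have h2a : 2 * a.natDegree < 2 * b.natDegree + h.natDegree := by
            rw [degree_eq_natDegree (pow_ne_zero 2 ha), natDegree_pow, hdbh] at hcmp
            exact_mod_cast hcmp
          rw [degree_eq_natDegree (mul_ne_zero (mul_ne_zero ha hb) hg),
            natDegree_mul (mul_ne_zero ha hb) hg, natDegree_mul ha hb, hdbh]
          have := hng hg
          exact_mod_cast (by omega :
            a.natDegree + b.natDegree + g.natDegree < 2 * b.natDegree + h.natDegree)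
        have hsum : (a ^ 2 + a * b * g + b ^ 2 * h).degree = (b ^ 2 * h).degree :=
          degree_add_eq_right_of_degree_lt
            (lt_of_le_of_lt (degree_add_le _ _) (max_lt hcmp habg))
        rw [hab, degree_one, hdbh] at hsum
        have : (0 : ℕ) = 2 * b.natDegree + h.natDegree := by exact_mod_cast hsum
        omega
      · rcases eq_or_ne a 0 with rfl | ha
        · rw [hdbh] at hcmp
          simp only [ne_eq, OfNat.ofNat_ne_zero, not_false_eq_true, zero_pow,
            degree_zero] at hcmp
          exact (WithBot.bot_ne_coe) hcmp
        have h2a : 2 * a.natDegree = 2 * b.natDegree + h.natDegree := by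
          rw [degree_eq_natDegree (pow_ne_zero 2 ha), natDegree_pow, hdbh] at hcmp
          exact_mod_cast hcmp
        obtain ⟨k, hk⟩ := hodd
        omega
      · have ha : a ≠ 0 := by
          rintro rfl
          simp only [ne_eq, OfNat.ofNat_ne_zero, not_false_eq_true, zero_pow,
            degree_zero] at hcmp
          exact not_lt_bot hcmp
        have hda : (a ^ 2).degree = ((2 * a.natDegree : ℕ) : WithBot ℕ) := by
          rw [degree_eq_natDegree (pow_ne_zero 2 ha), natDegree_pow]
        have h2a : 2 * b.natDegree + h.natDegree < 2 * a.natDegree := by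
          rw [hda, hdbh] at hcmp; exact_mod_cast hcmp
        have habg : (a * b * g + b ^ 2 * h).degree < (a ^ 2).degree := by
          refine lt_of_le_of_lt (degree_add_le _ _) (max_lt ?_ ?_)
          · rcases eq_or_ne g 0 with rfl | hg
            · rw [hda]; simp only [zero_mul, mul_zero, degree_zero]; exact WithBot.bot_lt_coe _
            rw [degree_eq_natDegree (mul_ne_zero (mul_ne_zero ha hb) hg),
              natDegree_mul (mul_ne_zero ha hb) hg, natDegree_mul ha hb, hda]
            have := hng hg
            exact_mod_cast (by omega :
              a.natDegree + b.natDegree + g.natDegree < 2 * a.natDegree)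
          · rw [hda, hdbh]
            exact_mod_cast h2a
        have hsum : (a ^ 2 + (a * b * g + b ^ 2 * h)).degree = (a ^ 2).degree :=
          degree_add_eq_left_of_degree_lt habg
        rw [← add_assoc, hab, degree_one, hda] at hsum
        have : (0 : ℕ) = 2 * a.natDegree := by exact_mod_cast hsum
        omega
    · -- Type 2
      have hg : g ≠ 0 := by
        rintro rfl; rw [degree_zero] at hgpos; exact not_lt_bot hgpos
      have hh : h ≠ 0 := by
        rintro rfl
        rw [degree_zero, degree_eq_natDegree hg] at heq
        have : ((2 * g.natDegree : ℕ) : WithBot ℕ) = ⊥ := by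
          rw [← heq]; push_cast; ring
        exact WithBot.coe_ne_bot this
      have hnh : h.natDegree = 2 * g.natDegree := by
        rw [degree_eq_natDegree hg, degree_eq_natDegree hh] at heq
        exact_mod_cast heq.symm
      have hng : 0 < g.natDegree := by
        rw [degree_eq_natDegree hg] at hgpos; exact_mod_cast hgpos
      have hbh0 : b ^ 2 * h ≠ 0 := mul_ne_zero (pow_ne_zero 2 hb) hh
      have hdbh : (b ^ 2 * h).degree = ((2 * b.natDegree + h.natDegree : ℕ) : WithBot ℕ) := by
        rw [degree_eq_natDegree hbh0, natDegree_mul (pow_ne_zero 2 hb) hh, natDegree_pow]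
      have hdbg : (b * g).degree = ((b.natDegree + g.natDegree : ℕ) : WithBot ℕ) := by
        rw [degree_eq_natDegree (mul_ne_zero hb hg), natDegree_mul hb hg]
      rcases lt_trichotomy a.degree ((b * g).degree) with hcmp | hcmp | hcmp
      · -- b²h dominates
        have hlt2 : ∀ _ : a ≠ 0, a.natDegree < b.natDegree + g.natDegree := by
          intro ha
          rw [degree_eq_natDegree ha, hdbg] at hcmp
          exact_mod_cast hcmp
        have hd1 : (a ^ 2).degree < (b ^ 2 * h).degree := by
          rcases eq_or_ne a 0 with rfl | ha
          · rw [hdbh]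
            simp only [ne_eq, OfNat.ofNat_ne_zero, not_false_eq_true, zero_pow, degree_zero]
            exact WithBot.bot_lt_coe _
          rw [degree_eq_natDegree (pow_ne_zero 2 ha), natDegree_pow, hdbh]
          have := hlt2 ha
          exact_mod_cast (by omega : 2 * a.natDegree < 2 * b.natDegree + h.natDegree)
        have hd2 : (a * b * g).degree < (b ^ 2 * h).degree := by
          rcases eq_or_ne a 0 with rfl | ha
          · rw [hdbh]; simp only [zero_mul, mul_zero, degree_zero]; exact WithBot.bot_lt_coe _
          rw [degree_eq_natDegree (mul_ne_zero (mul_ne_zero ha hb) hg),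
            natDegree_mul (mul_ne_zero ha hb) hg, natDegree_mul ha hb, hdbh]
          have := hlt2 ha
          exact_mod_cast (by omega :
            a.natDegree + b.natDegree + g.natDegree < 2 * b.natDegree + h.natDegree)
        have hsum : (a ^ 2 + a * b * g + b ^ 2 * h).degree = (b ^ 2 * h).degree :=
          degree_add_eq_right_of_degree_lt
            (lt_of_le_of_lt (degree_add_le _ _) (max_lt hd1 hd2))
        rw [hab, degree_one, hdbh] at hsum
        have : (0 : ℕ) = 2 * b.natDegree + h.natDegree := by exact_mod_cast hsum
        omega
      · -- equal degrees: coefficient argument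
        have ha : a ≠ 0 := by
          rintro rfl; rw [degree_zero, hdbg] at hcmp
          exact WithBot.bot_ne_coe hcmp
        have hna : a.natDegree = b.natDegree + g.natDegree := by
          rw [degree_eq_natDegree ha, hdbg] at hcmp
          exact_mod_cast hcmp
        set N := 2 * a.natDegree with hN
        have c1 : (a ^ 2).coeff N = 1 := by
          have h1 : (a ^ 2).natDegree = N := by rw [natDegree_pow, hN]
          rw [← h1, coeff_natDegree, lc_one _ (pow_ne_zero 2 ha)]
        have c2 : (a * b * g).coeff N = 1 := by
          have h1 : (a * b * g).natDegree = N := by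
            rw [natDegree_mul (mul_ne_zero ha hb) hg, natDegree_mul ha hb]; omega
          rw [← h1, coeff_natDegree, lc_one _ (mul_ne_zero (mul_ne_zero ha hb) hg)]
        have c3 : (b ^ 2 * h).coeff N = 1 := by
          have h1 : (b ^ 2 * h).natDegree = N := by
            rw [natDegree_mul (pow_ne_zero 2 hb) hh, natDegree_pow]; omega
          rw [← h1, coeff_natDegree, lc_one _ hbh0]
        have hco := congrArg (fun p => coeff p N) hab
        simp only [coeff_add, c1, c2, c3, coeff_one] at hco
        have hN0 : N ≠ 0 := by omega
        rw [if_neg (by omega : ¬ N = 0)] at hco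
        exact absurd hco (by decide)
      · -- a² dominates
        have ha : a ≠ 0 := by
          rintro rfl; rw [degree_zero] at hcmp; exact not_lt_bot hcmp
        have hgt : b.natDegree + g.natDegree < a.natDegree := by
          rw [degree_eq_natDegree ha, hdbg] at hcmp
          exact_mod_cast hcmp
        have hda : (a ^ 2).degree = ((2 * a.natDegree : ℕ) : WithBot ℕ) := by
          rw [degree_eq_natDegree (pow_ne_zero 2 ha), natDegree_pow]
        have habg : (a * b * g + b ^ 2 * h).degree < (a ^ 2).degree := by
          refine lt_of_le_of_lt (degree_add_le _ _) (max_lt ?_ ?_)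
          · rw [degree_eq_natDegree (mul_ne_zero (mul_ne_zero ha hb) hg),
              natDegree_mul (mul_ne_zero ha hb) hg, natDegree_mul ha hb, hda]
            exact_mod_cast (by omega :
              a.natDegree + b.natDegree + g.natDegree < 2 * a.natDegree)
          · rw [hdbh, hda]
            exact_mod_cast (by omega : 2 * b.natDegree + h.natDegree < 2 * a.natDegree)
        have hsum : (a ^ 2 + (a * b * g + b ^ 2 * h)).degree = (a ^ 2).degree :=
          degree_add_eq_left_of_degree_lt habg
        rw [← add_assoc, hab, degree_one, hda] at hsum
        have : (0 : ℕ) = 2 * a.natDegree := by exact_mod_cast hsum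
        omega
  subst hbz
  simp only [mul_zero, zero_mul, ne_eq, OfNat.ofNat_ne_zero, not_false_eq_true, zero_pow,
    add_zero] at hab
  refine ⟨?_, rfl⟩
  have haa : a * a = 1 := by rw [← sq]; exact hab
  obtain ⟨r, hr, hCr⟩ := Polynomial.isUnit_iff.mp (IsUnit.of_mul_eq_one a haa)
  rw [← hCr, zmod2_ne_zero r hr.ne_zero, map_one]


/-- If `(g,h)` is Type 1 (`2 deg g < deg h`, `deg h` odd), or Type 2 with `deg g > 0`,
then `F₂[x,y]/(y² + gy + h)` has trivial unit group; equivalently, the only solution of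
`a² + abg + b²h = 1` is `(a,b) = (1,0)`. -/
theorem stmt_15 (g h : Polynomial (ZMod 2))
    (hcase : (2 * g.degree < h.degree ∧ Odd h.natDegree) ∨
      (2 * g.degree = h.degree ∧ 0 < g.degree)) :
    (∀ u : (AdjoinRoot (quadPoly g h))ˣ, u = 1) ∧
    (∀ a b : Polynomial (ZMod 2),
      a ^ 2 + a * b * g + b ^ 2 * h = 1 → a = 1 ∧ b = 0) := by
  refine ⟨?_, eq_sol g h hcase⟩
  intro u
  obtain ⟨a, b, hz⟩ := exists_repr g h (u : AdjoinRoot (quadPoly g h))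
  obtain ⟨c, d, hw⟩ := exists_repr g h ((u⁻¹ : (AdjoinRoot (quadPoly g h))ˣ) : AdjoinRoot (quadPoly g h))
  have hmul : (u : AdjoinRoot (quadPoly g h)) *
      ((u⁻¹ : (AdjoinRoot (quadPoly g h))ˣ) : AdjoinRoot (quadPoly g h)) = 1 := u.mul_inv
  have hN : AdjoinRoot.of (quadPoly g h)
      ((a ^ 2 + a * b * g + b ^ 2 * h) * (c ^ 2 + c * d * g + d ^ 2 * h)) = 1 := by
    rw [map_mul, ← norm_compute g h a b, ← norm_compute g h c d, ← hz, ← hw]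
    calc ((u : AdjoinRoot (quadPoly g h)) * sigma g h (u : AdjoinRoot (quadPoly g h))) *
          (((u⁻¹ : (AdjoinRoot (quadPoly g h))ˣ) : AdjoinRoot (quadPoly g h)) *
            sigma g h ((u⁻¹ : (AdjoinRoot (quadPoly g h))ˣ) : AdjoinRoot (quadPoly g h)))
        = ((u : AdjoinRoot (quadPoly g h)) *
            ((u⁻¹ : (AdjoinRoot (quadPoly g h))ˣ) : AdjoinRoot (quadPoly g h))) *
          sigma g h ((u : AdjoinRoot (quadPoly g h)) *
            ((u⁻¹ : (AdjoinRoot (quadPoly g h))ˣ) : AdjoinRoot (quadPoly g h))) := by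
          rw [map_mul]; ring
      _ = 1 := by rw [hmul, map_one, mul_one]
  have h1 : (a ^ 2 + a * b * g + b ^ 2 * h) * (c ^ 2 + c * d * g + d ^ 2 * h) = 1 := by
    apply of_inj g h
    rw [hN, map_one]
  obtain ⟨r, hr, hCr⟩ := Polynomial.isUnit_iff.mp (IsUnit.of_mul_eq_one _ h1)
  have hP : a ^ 2 + a * b * g + b ^ 2 * h = 1 := by
    rw [← hCr, zmod2_ne_zero r hr.ne_zero, map_one]
  obtain ⟨ha, hb⟩ := eq_sol g h hcase a b hP
  ext
  rw [hz, ha, hb, map_one, map_zero, zero_mul, add_zero]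
  rfl
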